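/- If u : U → I and v : V → I are central idempotents in a symmetric monoidal category, then λ_I ∘ (u ⊗ v) : U ⊗ V → I is again a central idempotent. -/

import Mathlib

/-!
Both composites `(U ⊗ V) ⊗ (U ⊗ V) ⟶ U ⊗ V` attached to `λ_I ∘ (u ⊗ v)` factor, through the
interchange isomorphism `tensorμ : (U ⊗ V) ⊗ (U ⊗ V) ≅ (U ⊗ U) ⊗ (V ⊗ V)` of the braiding, as the
tensor product of the corresponding composites for `u` and for `v`. Hence they agree because those
of `u` and `v` do, and they are invertible because those of `u` and `v` are.
-/

open CategoryTheory MonoidalCategory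

def IsCentralIdempotent {C : Type*} [Category C] [MonoidalCategory C]
    {U : C} (u : U ⟶ 𝟙_ C) : Prop :=
  (U ◁ u ≫ (ρ_ U).hom = u ▷ U ≫ (λ_ U).hom) ∧ IsIso (U ◁ u ≫ (ρ_ U).hom)

section

variable {C : Type*} [Category C] [MonoidalCategory C] [BraidedCategory C]

instance isIso_tensorμ (X₁ X₂ Y₁ Y₂ : C) : IsIso (tensorμ X₁ X₂ Y₁ Y₂) :=
  ⟨tensorδ X₁ X₂ Y₁ Y₂, tensorμ_tensorδ X₁ X₂ Y₁ Y₂, tensorδ_tensorμ X₁ X₂ Y₁ Y₂⟩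

theorem whiskerLeft_tensorHom_leftUnitor_comp_rightUnitor {X₁ X₂ Y₁ Y₂ : C}
    (f : Y₁ ⟶ 𝟙_ C) (g : Y₂ ⟶ 𝟙_ C) :
    (X₁ ⊗ X₂) ◁ ((f ⊗ₘ g) ≫ (λ_ (𝟙_ C)).hom) ≫ (ρ_ (X₁ ⊗ X₂)).hom =
      tensorμ X₁ X₂ Y₁ Y₂ ≫ ((X₁ ◁ f ≫ (ρ_ X₁).hom) ⊗ₘ (X₂ ◁ g ≫ (ρ_ X₂).hom)) := by
  rw [tensor_right_unitality]
  simp only [whiskerLeft_comp, Category.assoc, ← whiskerLeft_comp_assoc, Iso.hom_inv_id,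
    whiskerLeft_id, Category.id_comp, tensorμ_natural_right_assoc, tensorHom_comp_tensorHom]

theorem tensorHom_leftUnitor_whiskerRight_comp_leftUnitor {X₁ X₂ Y₁ Y₂ : C}
    (f : Y₁ ⟶ 𝟙_ C) (g : Y₂ ⟶ 𝟙_ C) :
    ((f ⊗ₘ g) ≫ (λ_ (𝟙_ C)).hom) ▷ (X₁ ⊗ X₂) ≫ (λ_ (X₁ ⊗ X₂)).hom =
      tensorμ Y₁ Y₂ X₁ X₂ ≫ ((f ▷ X₁ ≫ (λ_ X₁).hom) ⊗ₘ (g ▷ X₂ ≫ (λ_ X₂).hom)) := by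
  rw [tensor_left_unitality]
  simp only [comp_whiskerRight, Category.assoc, ← comp_whiskerRight_assoc, Iso.hom_inv_id,
    id_whiskerRight, Category.id_comp, tensorμ_natural_left_assoc, tensorHom_comp_tensorHom]

end

/-- The tensor product of two central idempotents, `λ_I ∘ (u ⊗ v) : U ⊗ V ⟶ I`,
is again a central idempotent. -/
theorem centralIdempotent_tensor {C : Type*} [Category C] [MonoidalCategory C]
    [SymmetricCategory C] {U V : C} (u : U ⟶ 𝟙_ C) (v : V ⟶ 𝟙_ C)
    (hu : IsCentralIdempotent u) (hv : IsCentralIdempotent v) :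
    IsCentralIdempotent ((u ⊗ₘ v) ≫ (λ_ (𝟙_ C)).hom) := by
  obtain ⟨hu_central, hu_iso⟩ := hu
  obtain ⟨hv_central, hv_iso⟩ := hv
  refine ⟨?_, ?_⟩
  · rw [whiskerLeft_tensorHom_leftUnitor_comp_rightUnitor,
      tensorHom_leftUnitor_whiskerRight_comp_leftUnitor, hu_central, hv_central]
  · rw [whiskerLeft_tensorHom_leftUnitor_comp_rightUnitor]
    infer_instance
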